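/- Let μ ∈ (-1, 1], Q > 0 and r₀ > 0, and let G : [r₀, ∞) → (0, ∞) be a C¹ positive solution of the Riccati equation G'(r) = −r^μ G(r)² − (μ/r) G(r) + Q r^μ for all r > r₀. Then there exist constants 0 < k̲ ≤ k̄ < ∞ with k̲ ≤ G(r) ≤ k̄ for all r ≥ r₀, and lim_{r→+∞} G(r) = √Q. -/

import Mathlib

open Set Filter Real Topology

namespace Stmt2Aux

/-- Sign computation: at a contact point `G x = K`, the ODE right-hand side equals
`-(((K^2 - Q) * x^(μ+1) + μ*K)) / x`. -/
private lemma rhs_eq (μ Q K : ℝ) {x : ℝ} (hx : 0 < x) :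
    -(x ^ μ) * K ^ 2 - μ / x * K + Q * x ^ μ
      = -((K ^ 2 - Q) * x ^ (μ + 1) + μ * K) / x := by
  rw [Real.rpow_add_one hx.ne' μ]
  field_simp
  ring

/-- Upper barrier invariance. -/
lemma inv_up {μ Q r₀ : ℝ} (hr₀ : 0 < r₀) {G : ℝ → ℝ}
    (hGC1 : ContDiffOn ℝ 1 G (Set.Ici r₀))
    (hode : ∀ r > r₀,
      HasDerivAt G (-(r ^ μ) * (G r) ^ 2 - (μ / r) * G r + Q * r ^ μ) r)
    {a K : ℝ} (ha : r₀ ≤ a) (hGa : G a < K)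
    (hK : ∀ x ≥ a, 0 < (K ^ 2 - Q) * x ^ (μ + 1) + μ * K) :
    ∀ r ≥ a, G r ≤ K := by
  intro r hr
  rcases eq_or_lt_of_le hr with rfl | hr
  · exact hGa.le
  -- find a' ∈ Ioo a r with G a' < K, using continuity of G at a
  have hca : ContinuousWithinAt G (Set.Ici r₀) a := hGC1.continuousOn a ha
  have h1 : G ⁻¹' Set.Iio K ∈ 𝓝[Set.Ici r₀] a := hca (Iio_mem_nhds hGa)
  have hsub : Set.Ioi a ⊆ Set.Ici r₀ := fun x hx => le_trans ha (le_of_lt hx)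
  have h2 : G ⁻¹' Set.Iio K ∈ 𝓝[>] a := nhdsWithin_mono a hsub h1
  have h3 : Set.Ioo a r ∈ 𝓝[>] a := Ioo_mem_nhdsGT_of_mem ⟨le_refl a, hr⟩
  obtain ⟨a', ha'⟩ := Filter.nonempty_of_mem (Filter.inter_mem h2 h3)
  obtain ⟨hGa' , ha'r⟩ := ha'
  have hGa' : G a' < K := hGa'
  have haa' : a < a' := ha'r.1
  have hr₀a' : r₀ ≤ a' := le_trans ha haa'.le
  have key := image_le_of_deriv_right_lt_deriv_boundary
      (f := G) (f' := fun x => -(x ^ μ) * (G x) ^ 2 - (μ / x) * G x + Q * x ^ μ)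
      (a := a') (b := r) (B := fun _ => K) (B' := fun _ => 0)
      (hGC1.continuousOn.mono (fun x hx => le_trans hr₀a' hx.1))
      (fun x hx => (hode x (lt_of_le_of_lt ha (lt_of_lt_of_le haa' hx.1))).hasDerivWithinAt)
      hGa'.le (fun x => hasDerivAt_const x K) ?_ ⟨ha'r.2.le, le_refl r⟩
  · exact key
  · intro x hx hGx
    have hx0 : 0 < x := hr₀.trans_le (le_trans hr₀a' hx.1)
    have hxa : a ≤ x := le_trans haa'.le hx.1
    have hpos := hK x hxa
    have hGx' : G x = K := hGx
    show -(x ^ μ) * (G x) ^ 2 - (μ / x) * G x + Q * x ^ μ < 0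
    rw [hGx', rhs_eq μ Q K hx0]
    exact div_neg_of_neg_of_pos (by linarith) hx0

/-- Lower barrier invariance. -/
lemma inv_lo {μ Q r₀ : ℝ} (hr₀ : 0 < r₀) {G : ℝ → ℝ}
    (hGC1 : ContDiffOn ℝ 1 G (Set.Ici r₀))
    (hode : ∀ r > r₀,
      HasDerivAt G (-(r ^ μ) * (G r) ^ 2 - (μ / r) * G r + Q * r ^ μ) r)
    {a k : ℝ} (ha : r₀ ≤ a) (hGa : k < G a)
    (hk : ∀ x ≥ a, 0 < (Q - k ^ 2) * x ^ (μ + 1) - μ * k) :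
    ∀ r ≥ a, k ≤ G r := by
  intro r hr
  rcases eq_or_lt_of_le hr with rfl | hr
  · exact hGa.le
  have hca : ContinuousWithinAt G (Set.Ici r₀) a := hGC1.continuousOn a ha
  have h1 : G ⁻¹' Set.Ioi k ∈ 𝓝[Set.Ici r₀] a := hca (Ioi_mem_nhds hGa)
  have hsub : Set.Ioi a ⊆ Set.Ici r₀ := fun x hx => le_trans ha (le_of_lt hx)
  have h2 : G ⁻¹' Set.Ioi k ∈ 𝓝[>] a := nhdsWithin_mono a hsub h1
  have h3 : Set.Ioo a r ∈ 𝓝[>] a := Ioo_mem_nhdsGT_of_mem ⟨le_refl a, hr⟩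
  obtain ⟨a', ha'⟩ := Filter.nonempty_of_mem (Filter.inter_mem h2 h3)
  obtain ⟨hGa' , ha'r⟩ := ha'
  have hGa' : k < G a' := hGa'
  have haa' : a < a' := ha'r.1
  have hr₀a' : r₀ ≤ a' := le_trans ha haa'.le
  have key := image_le_of_deriv_right_lt_deriv_boundary
      (f := fun x => -G x)
      (f' := fun x => -(-(x ^ μ) * (G x) ^ 2 - (μ / x) * G x + Q * x ^ μ))
      (a := a') (b := r) (B := fun _ => -k) (B' := fun _ => 0)
      ((hGC1.continuousOn.mono (fun x hx => le_trans hr₀a' hx.1)).neg)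
      (fun x hx =>
        ((hode x (lt_of_le_of_lt ha (lt_of_lt_of_le haa' hx.1))).neg).hasDerivWithinAt)
      (by simpa using hGa'.le) (fun x => hasDerivAt_const x (-k)) ?_ ⟨ha'r.2.le, le_refl r⟩
  · have := key
    simpa using this
  · intro x hx hGx
    have hx0 : 0 < x := hr₀.trans_le (le_trans hr₀a' hx.1)
    have hxa : a ≤ x := le_trans haa'.le hx.1
    have hpos := hk x hxa
    have hGx' : -G x = -k := hGx
    have hGxk : G x = k := by linarith
    show -(-(x ^ μ) * (G x) ^ 2 - (μ / x) * G x + Q * x ^ μ) < 0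
    rw [hGxk, rhs_eq μ Q k hx0]
    have h0 : 0 < ((Q - k ^ 2) * x ^ (μ + 1) - μ * k) / x := div_pos hpos hx0
    have heq : -(-((k ^ 2 - Q) * x ^ (μ + 1) + μ * k) / x)
        = -(((Q - k ^ 2) * x ^ (μ + 1) - μ * k) / x) := by ring
    rw [heq]
    linarith

/-- Crossing lemma (upper): `G` must eventually dip below any level `K` with `K² > Q`. -/
lemma cross_up {μ Q r₀ : ℝ} (hμ1 : -1 < μ) (hr₀ : 0 < r₀) {G : ℝ → ℝ}
    (hGpos : ∀ r ≥ r₀, 0 < G r)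
    (hGC1 : ContDiffOn ℝ 1 G (Set.Ici r₀))
    (hode : ∀ r > r₀,
      HasDerivAt G (-(r ^ μ) * (G r) ^ 2 - (μ / r) * G r + Q * r ^ μ) r)
    {C : ℝ} (hC : ∀ r ≥ r₀, G r ≤ C)
    {a K : ℝ} (ha : r₀ ≤ a) (hK0 : 0 ≤ K) (hK : Q < K ^ 2) :
    ∃ r ≥ a, G r ≤ K := by
  by_contra hcon
  push_neg at hcon
  have hμ2 : 0 < μ + 1 := by linarith
  have hCpos : 0 < C := lt_of_lt_of_le (hGpos r₀ le_rfl) (hC r₀ le_rfl)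
  set δ := K ^ 2 - Q with hδdef
  have hδpos : 0 < δ := by simp only [hδdef]; linarith
  clear_value δ
  obtain ⟨a₀, ha₀⟩ := Filter.eventually_atTop.1
    ((tendsto_rpow_atTop hμ2).eventually_ge_atTop (2 * (|μ| * C) / δ))
  set a₁ := max a₀ a with ha₁def
  have ha₁a : a ≤ a₁ := le_max_right _ _
  have ha₀a₁ : a₀ ≤ a₁ := le_max_left _ _
  have hr₀a₁ : r₀ ≤ a₁ := le_trans ha ha₁a
  clear_value a₁
  set c := δ / (2 * (μ + 1)) with hcdef
  have hcpos : 0 < c := div_pos hδpos (by linarith)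
  clear_value c
  set F := fun x => G x + c * x ^ (μ + 1) with hFdef
  clear_value F
  -- F is antitone on [a₁, ∞)
  have hFanti : AntitoneOn F (Set.Ici a₁) := by
    have hcont : ContinuousOn F (Set.Ici a₁) := by
      rw [hFdef]
      refine (hGC1.continuousOn.mono (fun x hx => le_trans hr₀a₁ hx)).add ?_
      exact (continuous_const.mul
        (Real.continuous_rpow_const hμ2.le)).continuousOn
    refine antitoneOn_of_deriv_nonpos (convex_Ici a₁) hcont ?_ ?_
    · rw [interior_Ici]
      intro x hx
      have hx0 : (0:ℝ) < x := hr₀.trans (lt_of_le_of_lt hr₀a₁ hx)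
      have h1 : DifferentiableAt ℝ G x :=
        (hode x (lt_of_le_of_lt hr₀a₁ hx)).differentiableAt
      have h2 : DifferentiableAt ℝ (fun x : ℝ => x ^ (μ + 1)) x :=
        (Real.hasDerivAt_rpow_const (p := μ + 1) (Or.inl hx0.ne')).differentiableAt
      rw [hFdef]
      exact ((h1.add (h2.const_mul c)).differentiableWithinAt)
    · rw [interior_Ici]
      intro x hx
      have hxr₀ : r₀ < x := lt_of_le_of_lt hr₀a₁ hx
      have hx0 : (0:ℝ) < x := hr₀.trans hxr₀
      have hD : HasDerivAt F
          ((-(x ^ μ) * (G x) ^ 2 - (μ / x) * G x + Q * x ^ μ)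
            + c * ((μ + 1) * x ^ (μ + 1 - 1))) x := by
        rw [hFdef]
        exact (hode x hxr₀).add
          ((Real.hasDerivAt_rpow_const (p := μ + 1) (Or.inl hx0.ne')).const_mul c)
      rw [hD.deriv]
      have hx1 : x ^ (μ + 1 - 1) = x ^ μ := by norm_num
      rw [hx1]
      have hA : 0 < x ^ μ := Real.rpow_pos_of_pos hx0 μ
      have hxa : a ≤ x := le_trans ha₁a hx.le
      have hGx := hcon x hxa
      have hGxC := hC x (le_trans ha hxa)
      have hGx2 : K ^ 2 ≤ (G x) ^ 2 := by nlinarith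
      have hc1 : c * ((μ + 1) * x ^ μ) = (δ / 2) * x ^ μ := by
        rw [hcdef]; field_simp
      rw [hc1]
      -- bound -μ G x / x ≤ |μ| C / x
      have hb1 : -(μ / x) * G x ≤ |μ| * C / x := by
        have hg := hGpos x (le_trans ha hxa)
        have h1 : -μ * G x ≤ |μ| * G x :=
          mul_le_mul_of_nonneg_right (neg_le_abs μ) hg.le
        have h2 : |μ| * G x ≤ |μ| * C := mul_le_mul_of_nonneg_left hGxC (abs_nonneg μ)
        have h3 : -(μ / x) * G x = (-μ * G x) / x := by ring
        rw [h3]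
        exact (div_le_div_iff_of_pos_right hx0).2 (h1.trans h2)
      -- bound |μ| C / x ≤ (δ/2) x^μ
      have hb2 : |μ| * C / x ≤ (δ / 2) * x ^ μ := by
        have hxx : 2 * (|μ| * C) / δ ≤ x ^ (μ + 1) := by
          exact ha₀ x (le_trans ha₀a₁ hx.le)
        have hxp : x ^ (μ + 1) = x ^ μ * x := by
          rw [Real.rpow_add_one hx0.ne']
        rw [hxp, div_le_iff₀ hδpos] at hxx
        rw [div_le_iff₀ hx0]
        calc |μ| * C ≤ (x ^ μ * x * δ) / 2 := by linarith
          _ = δ / 2 * x ^ μ * x := by ring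
      have hb3 : -(x ^ μ) * (G x) ^ 2 + Q * x ^ μ ≤ -δ * x ^ μ := by nlinarith
      have : -(x ^ μ) * (G x) ^ 2 - (μ / x) * G x + Q * x ^ μ ≤ -(δ/2) * x ^ μ := by
        have := hb1.trans hb2
        nlinarith
      linarith
  -- get a contradiction from G becoming negative
  obtain ⟨r₁, hr₁⟩ := Filter.eventually_atTop.1
    ((tendsto_rpow_atTop hμ2).eventually_ge_atTop ((F a₁ + 1) / c))
  set r := max r₁ a₁ with hrdef
  have hra₁ : a₁ ≤ r := le_max_right _ _
  have hr₁r : r₁ ≤ r := le_max_left _ _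
  clear_value r
  have h4 : F r ≤ F a₁ := hFanti (self_mem_Ici) hra₁ hra₁
  have h5 : (F a₁ + 1) / c ≤ r ^ (μ + 1) := hr₁ r hr₁r
  have h6 : F a₁ + 1 ≤ c * r ^ (μ + 1) := by
    rw [div_le_iff₀ hcpos] at h5; linarith
  have h7 : G r ≤ -1 := by
    have : G r = F r - c * r ^ (μ + 1) := by simp [hFdef]
    rw [this]; linarith
  have := hGpos r (le_trans hr₀a₁ hra₁)
  linarith

/-- Crossing lemma (lower): `G` must eventually rise above any level `K` with `K² < Q`. -/
lemma cross_lo {μ Q r₀ : ℝ} (hμ1 : -1 < μ) (hr₀ : 0 < r₀) {G : ℝ → ℝ}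
    (hGpos : ∀ r ≥ r₀, 0 < G r)
    (hGC1 : ContDiffOn ℝ 1 G (Set.Ici r₀))
    (hode : ∀ r > r₀,
      HasDerivAt G (-(r ^ μ) * (G r) ^ 2 - (μ / r) * G r + Q * r ^ μ) r)
    {C : ℝ} (hC : ∀ r ≥ r₀, G r ≤ C)
    {a K : ℝ} (ha : r₀ ≤ a) (hK : K ^ 2 < Q) :
    ∃ r ≥ a, K ≤ G r := by
  by_contra hcon
  push_neg at hcon
  have hμ2 : 0 < μ + 1 := by linarith
  have hCpos : 0 < C := lt_of_lt_of_le (hGpos r₀ le_rfl) (hC r₀ le_rfl)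
  set δ := Q - K ^ 2 with hδdef
  have hδpos : 0 < δ := by simp only [hδdef]; linarith
  clear_value δ
  obtain ⟨a₀, ha₀⟩ := Filter.eventually_atTop.1
    ((tendsto_rpow_atTop hμ2).eventually_ge_atTop (2 * (|μ| * C) / δ))
  set a₁ := max a₀ a with ha₁def
  have ha₁a : a ≤ a₁ := le_max_right _ _
  have ha₀a₁ : a₀ ≤ a₁ := le_max_left _ _
  have hr₀a₁ : r₀ ≤ a₁ := le_trans ha ha₁a
  clear_value a₁
  set c := δ / (2 * (μ + 1)) with hcdef
  have hcpos : 0 < c := div_pos hδpos (by linarith)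
  clear_value c
  set F := fun x => G x - c * x ^ (μ + 1) with hFdef
  clear_value F
  have hFmono : MonotoneOn F (Set.Ici a₁) := by
    have hcont : ContinuousOn F (Set.Ici a₁) := by
      rw [hFdef]
      refine (hGC1.continuousOn.mono (fun x hx => le_trans hr₀a₁ hx)).sub ?_
      exact (continuous_const.mul
        (Real.continuous_rpow_const hμ2.le)).continuousOn
    refine monotoneOn_of_deriv_nonneg (convex_Ici a₁) hcont ?_ ?_
    · rw [interior_Ici]
      intro x hx
      have hx0 : (0:ℝ) < x := hr₀.trans (lt_of_le_of_lt hr₀a₁ hx)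
      have h1 : DifferentiableAt ℝ G x :=
        (hode x (lt_of_le_of_lt hr₀a₁ hx)).differentiableAt
      have h2 : DifferentiableAt ℝ (fun x : ℝ => x ^ (μ + 1)) x :=
        (Real.hasDerivAt_rpow_const (p := μ + 1) (Or.inl hx0.ne')).differentiableAt
      rw [hFdef]
      exact ((h1.sub (h2.const_mul c)).differentiableWithinAt)
    · rw [interior_Ici]
      intro x hx
      have hxr₀ : r₀ < x := lt_of_le_of_lt hr₀a₁ hx
      have hx0 : (0:ℝ) < x := hr₀.trans hxr₀
      have hD : HasDerivAt F
          ((-(x ^ μ) * (G x) ^ 2 - (μ / x) * G x + Q * x ^ μ)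
            - c * ((μ + 1) * x ^ (μ + 1 - 1))) x := by
        rw [hFdef]
        exact (hode x hxr₀).sub
          ((Real.hasDerivAt_rpow_const (p := μ + 1) (Or.inl hx0.ne')).const_mul c)
      rw [hD.deriv]
      have hx1 : x ^ (μ + 1 - 1) = x ^ μ := by norm_num
      rw [hx1]
      have hA : 0 < x ^ μ := Real.rpow_pos_of_pos hx0 μ
      have hxa : a ≤ x := le_trans ha₁a hx.le
      have hGx := hcon x hxa
      have hGxpos := hGpos x (le_trans ha hxa)
      have hGxC := hC x (le_trans ha hxa)
      have hGx2 : (G x) ^ 2 ≤ K ^ 2 := by nlinarith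
      have hc1 : c * ((μ + 1) * x ^ μ) = (δ / 2) * x ^ μ := by
        rw [hcdef]; field_simp
      rw [hc1]
      have hb1 : -(|μ| * C / x) ≤ -(μ / x) * G x := by
        have h1 : -|μ| * G x ≤ -μ * G x :=
          mul_le_mul_of_nonneg_right (neg_le_neg (le_abs_self μ)) hGxpos.le
        have h2 : -|μ| * C ≤ -|μ| * G x := by nlinarith [abs_nonneg μ]
        have h3 : -(μ / x) * G x = (-μ * G x) / x := by ring
        have h4 : -(|μ| * C / x) = (-|μ| * C) / x := by ring
        rw [h3, h4]
        exact (div_le_div_iff_of_pos_right hx0).2 (h2.trans h1)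
      have hb2 : |μ| * C / x ≤ (δ / 2) * x ^ μ := by
        have hxx : 2 * (|μ| * C) / δ ≤ x ^ (μ + 1) :=
          ha₀ x (le_trans ha₀a₁ hx.le)
        have hxp : x ^ (μ + 1) = x ^ μ * x := by
          rw [Real.rpow_add_one hx0.ne']
        rw [hxp, div_le_iff₀ hδpos] at hxx
        rw [div_le_iff₀ hx0]
        calc |μ| * C ≤ (x ^ μ * x * δ) / 2 := by linarith
          _ = δ / 2 * x ^ μ * x := by ring
      have hb3 : δ * x ^ μ ≤ -(x ^ μ) * (G x) ^ 2 + Q * x ^ μ := by nlinarith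
      nlinarith
  obtain ⟨r₁, hr₁⟩ := Filter.eventually_atTop.1
    ((tendsto_rpow_atTop hμ2).eventually_ge_atTop ((K + 1 - F a₁) / c))
  set r := max r₁ a₁ with hrdef
  have hra₁ : a₁ ≤ r := le_max_right _ _
  have hr₁r : r₁ ≤ r := le_max_left _ _
  clear_value r
  have h4 : F a₁ ≤ F r := hFmono (self_mem_Ici) hra₁ hra₁
  have h5 : (K + 1 - F a₁) / c ≤ r ^ (μ + 1) := hr₁ r hr₁r
  have h6 : K + 1 - F a₁ ≤ c * r ^ (μ + 1) := by
    rw [div_le_iff₀ hcpos] at h5; linarith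
  have h7 : K + 1 ≤ G r := by
    have : G r = F r + c * r ^ (μ + 1) := by simp [hFdef]
    rw [this]; linarith
  have := hcon r (le_trans ha₁a hra₁)
  linarith

end Stmt2Aux

open Stmt2Aux in
set_option maxHeartbeats 1600000 in
/-- Let `μ ∈ (-1,1]`, `Q > 0`, `r₀ > 0`, and let `G` be a `C¹` positive
solution on `[r₀,∞)` of the Riccati equation
`G'(r) = -r^μ G(r)² - (μ/r) G(r) + Q r^μ` for `r > r₀`.
Then `G` is bounded between two positive constants on `[r₀,∞)` and `G(r) → √Q` as
`r → +∞`. -/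
theorem stmt_2
    (μ Q r₀ : ℝ) (hμ : μ ∈ Set.Ioc (-1 : ℝ) 1) (hQ : 0 < Q) (hr₀ : 0 < r₀)
    (G : ℝ → ℝ)
    (hGpos : ∀ r ≥ r₀, 0 < G r)
    (hGC1 : ContDiffOn ℝ 1 G (Set.Ici r₀))
    (hode : ∀ r > r₀,
      HasDerivAt G (-(r ^ μ) * (G r) ^ 2 - (μ / r) * G r + Q * r ^ μ) r) :
    (∃ klo khi : ℝ, 0 < klo ∧ klo ≤ khi ∧ ∀ r ≥ r₀, klo ≤ G r ∧ G r ≤ khi) ∧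
    Filter.Tendsto G Filter.atTop (nhds (Real.sqrt Q)) := by
  obtain ⟨hμ1, hμ2⟩ := hμ
  have hμp : 0 < μ + 1 := by linarith
  set t := r₀ ^ (μ + 1) with htdef
  have ht : 0 < t := Real.rpow_pos_of_pos hr₀ _
  have htmono : ∀ x ≥ r₀, t ≤ x ^ (μ + 1) := fun x hx =>
    Real.rpow_le_rpow hr₀.le hx hμp.le
  clear_value t
  have hG0 := hGpos r₀ le_rfl
  -- upper bound C
  set C := G r₀ + 1 + (2 + Q * t) / t with hCdef
  have ht2 : 0 < (2 + Q * t) / t := div_pos (by nlinarith) ht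
  have hC1 : 1 < C := by rw [hCdef]; linarith
  have hCG : G r₀ < C := by rw [hCdef]; linarith
  have hCt : 2 + Q * t ≤ C * t := by
    have h : (2 + Q * t) / t ≤ C := by rw [hCdef]; linarith
    rw [div_le_iff₀ ht] at h; linarith
  clear_value C
  have hCcond : ∀ x ≥ r₀, 0 < (C ^ 2 - Q) * x ^ (μ + 1) + μ * C := by
    intro x hx
    have hxt := htmono x hx
    have h1 : 2 * C + Q * t ≤ C ^ 2 * t := by
      nlinarith [mul_le_mul_of_nonneg_left hCt (by linarith : (0:ℝ) ≤ C),
        mul_nonneg (mul_nonneg (by linarith : (0:ℝ) ≤ C - 1) hQ.le) ht.le]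
    have h2 : 0 < C ^ 2 - Q := by nlinarith
    have h3 : (C ^ 2 - Q) * t ≤ (C ^ 2 - Q) * x ^ (μ + 1) :=
      mul_le_mul_of_nonneg_left hxt h2.le
    have h4 : -C ≤ μ * C := by nlinarith
    nlinarith
  have hup : ∀ r ≥ r₀, G r ≤ C := inv_up hr₀ hGC1 hode le_rfl hCG hCcond
  -- lower bound k
  set k := min (G r₀ / 2) (min (Real.sqrt Q / 2) (Q * t / 4)) with hkdef
  have hk0 : 0 < k := lt_min (half_pos hG0)
    (lt_min (half_pos (Real.sqrt_pos.2 hQ)) (by positivity))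
  have hkG : k < G r₀ := lt_of_le_of_lt (min_le_left _ _) (half_lt_self hG0)
  have hks : k ≤ Real.sqrt Q / 2 := (min_le_right _ _).trans (min_le_left _ _)
  have hkt : k ≤ Q * t / 4 := (min_le_right _ _).trans (min_le_right _ _)
  have hk2 : k ^ 2 ≤ Q / 4 := by
    nlinarith [mul_self_le_mul_self hk0.le hks, Real.sq_sqrt hQ.le]
  clear_value k
  have hkcond : ∀ x ≥ r₀, 0 < (Q - k ^ 2) * x ^ (μ + 1) - μ * k := by
    intro x hx
    have hxt := htmono x hx
    have h1 : (Q - k ^ 2) * t ≤ (Q - k ^ 2) * x ^ (μ + 1) :=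
      mul_le_mul_of_nonneg_left hxt (by nlinarith)
    have h2 : 3 * Q / 4 * t ≤ (Q - k ^ 2) * t := by nlinarith
    have h3 : μ * k ≤ k := by nlinarith
    nlinarith
  have hlo : ∀ r ≥ r₀, k ≤ G r := inv_lo hr₀ hGC1 hode le_rfl hkG hkcond
  constructor
  · exact ⟨k, C, hk0, le_trans (hlo r₀ le_rfl) (hup r₀ le_rfl),
      fun r hr => ⟨hlo r hr, hup r hr⟩⟩
  -- the limit
  rw [Metric.tendsto_atTop]
  intro ε hε
  set s := Real.sqrt Q with hsdef
  have hs : 0 < s := Real.sqrt_pos.2 hQ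
  have hs2 : s ^ 2 = Q := Real.sq_sqrt hQ.le
  clear_value s
  set ε₀ := min (ε / 4) (s / 2) with hedef
  have he0 : 0 < ε₀ := lt_min (by linarith) (by linarith)
  have hes : ε₀ ≤ s / 2 := min_le_right _ _
  have hee : ε₀ ≤ ε / 4 := min_le_left _ _
  clear_value ε₀
  -- upper part
  have hδ : 0 < (s + 2 * ε₀) ^ 2 - Q := by nlinarith
  obtain ⟨a₀, ha₀⟩ := Filter.eventually_atTop.1
    ((tendsto_rpow_atTop hμp).eventually_ge_atTop
      (2 * (s + 2 * ε₀) / ((s + 2 * ε₀) ^ 2 - Q)))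
  set a := max a₀ r₀ with hadef
  have har : r₀ ≤ a := le_max_right _ _
  have haa : a₀ ≤ a := le_max_left _ _
  clear_value a
  have hcondU : ∀ x ≥ a, 0 < ((s + 2 * ε₀) ^ 2 - Q) * x ^ (μ + 1) + μ * (s + 2 * ε₀) := by
    intro x hx
    have h1 := ha₀ x (le_trans haa hx)
    rw [div_le_iff₀ hδ] at h1
    have h4 : 0 ≤ (μ + 1) * (s + 2 * ε₀) :=
      mul_nonneg (by linarith) (by linarith)
    nlinarith
  obtain ⟨r₂, hr₂a, hr₂⟩ := cross_up hμ1 hr₀ hGpos hGC1 hode hup har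
    (by linarith : (0:ℝ) ≤ s + ε₀) (by nlinarith : Q < (s + ε₀) ^ 2)
  have hupper : ∀ r ≥ r₂, G r ≤ s + 2 * ε₀ :=
    inv_up hr₀ hGC1 hode (le_trans har hr₂a) (by linarith)
      (fun x hx => hcondU x (le_trans hr₂a hx))
  -- lower part
  have hδ' : 0 < Q - (s - 2 * ε₀) ^ 2 := by nlinarith
  obtain ⟨b₀, hb₀⟩ := Filter.eventually_atTop.1
    ((tendsto_rpow_atTop hμp).eventually_ge_atTop
      (2 * (s - 2 * ε₀) / (Q - (s - 2 * ε₀) ^ 2) + 1))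
  set b := max b₀ r₀ with hbdef
  have hbr : r₀ ≤ b := le_max_right _ _
  have hbb : b₀ ≤ b := le_max_left _ _
  clear_value b
  have hcondL : ∀ x ≥ b, 0 < (Q - (s - 2 * ε₀) ^ 2) * x ^ (μ + 1) - μ * (s - 2 * ε₀) := by
    intro x hx
    have h1 := hb₀ x (le_trans hbb hx)
    have h2 : 2 * (s - 2 * ε₀) / (Q - (s - 2 * ε₀) ^ 2) ≤ x ^ (μ + 1) - 1 := by linarith
    rw [div_le_iff₀ hδ'] at h2
    have h3 : μ * (s - 2 * ε₀) ≤ s - 2 * ε₀ := by nlinarith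
    nlinarith
  obtain ⟨r₃, hr₃b, hr₃⟩ := cross_lo hμ1 hr₀ hGpos hGC1 hode hup hbr
    (by nlinarith : (s - ε₀) ^ 2 < Q)
  have hlower : ∀ r ≥ r₃, s - 2 * ε₀ ≤ G r :=
    inv_lo hr₀ hGC1 hode (le_trans hbr hr₃b) (by linarith)
      (fun x hx => hcondL x (le_trans hr₃b hx))
  refine ⟨max r₂ r₃, fun r hr => ?_⟩
  have h1 := hupper r (le_trans (le_max_left _ _) hr)
  have h2 := hlower r (le_trans (le_max_right _ _) hr)
  rw [Real.dist_eq, abs_lt]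
  constructor <;> linarith
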